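/- Off the x-axis (i.e., when y² + z² ≠ 0 and F ≠ 0), the unit vectors F/‖F‖, H/‖H‖, G/‖G‖ form the columns of a matrix R_a ∈ SO(3): R_aᵀ R_a = I and det(R_a) = 1. -/

import Mathlib

set_option maxHeartbeats 2000000


open Matrix

noncomputable def Fvf (p : Fin 3 → ℝ) : Fin 3 → ℝ :=
  ![p 0 ^ 2 - p 1 ^ 2 - p 2 ^ 2, 2 * p 0 * p 1, 2 * p 0 * p 2]

noncomputable def Gvf (p : Fin 3 → ℝ) : Fin 3 → ℝ :=
  ![2 * p 0 * (p 1 ^ 2 + p 2 ^ 2), p 1 * (p 1 ^ 2 + p 2 ^ 2 - p 0 ^ 2),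
    p 2 * (p 1 ^ 2 + p 2 ^ 2 - p 0 ^ 2)]

noncomputable def Hvf (p : Fin 3 → ℝ) : Fin 3 → ℝ :=
  ![0, -p 2 * (p 0 ^ 2 + p 1 ^ 2 + p 2 ^ 2), p 1 * (p 0 ^ 2 + p 1 ^ 2 + p 2 ^ 2)]

/-- The Euclidean norm of a vector in `Fin 3 → ℝ`. -/
noncomputable def enorm3 (v : Fin 3 → ℝ) : ℝ := Real.sqrt (v ⬝ᵥ v)

theorem stmt_9 (p : Fin 3 → ℝ) (h : p 1 ^ 2 + p 2 ^ 2 ≠ 0)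
    (Ra : Matrix (Fin 3) (Fin 3) ℝ)
    (hRa : Ra = Matrix.of fun i =>
      ![Fvf p i / enorm3 (Fvf p), Hvf p i / enorm3 (Hvf p), Gvf p i / enorm3 (Gvf p)]) :
    Raᵀ * Ra = 1 ∧ Ra.det = 1 := by
  have hs : 0 < p 1 ^ 2 + p 2 ^ 2 := lt_of_le_of_ne (by positivity) (Ne.symm h)
  have hr : 0 < p 0 ^ 2 + p 1 ^ 2 + p 2 ^ 2 := by nlinarith
  obtain ⟨a, ha, hapos, ha2⟩ : ∃ a : ℝ, a = Real.sqrt (p 1 ^ 2 + p 2 ^ 2) ∧ 0 < a ∧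
      a ^ 2 = p 1 ^ 2 + p 2 ^ 2 :=
    ⟨Real.sqrt (p 1 ^ 2 + p 2 ^ 2), rfl, Real.sqrt_pos.mpr hs, Real.sq_sqrt hs.le⟩
  have hF : enorm3 (Fvf p) = p 0 ^ 2 + p 1 ^ 2 + p 2 ^ 2 := by
    have hd : Fvf p ⬝ᵥ Fvf p = (p 0 ^ 2 + p 1 ^ 2 + p 2 ^ 2) ^ 2 := by
      simp [Fvf, dotProduct, Fin.sum_univ_three]; ring
    rw [enorm3, hd, Real.sqrt_sq hr.le]
  have hH : enorm3 (Hvf p) = (p 0 ^ 2 + p 1 ^ 2 + p 2 ^ 2) * a := by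
    have hd : Hvf p ⬝ᵥ Hvf p = (p 0 ^ 2 + p 1 ^ 2 + p 2 ^ 2) ^ 2 * (p 1 ^ 2 + p 2 ^ 2) := by
      simp [Hvf, dotProduct, Fin.sum_univ_three]; ring
    rw [enorm3, hd, Real.sqrt_mul (by positivity), Real.sqrt_sq hr.le, ha]
  have hG : enorm3 (Gvf p) = (p 0 ^ 2 + p 1 ^ 2 + p 2 ^ 2) * a := by
    have hd : Gvf p ⬝ᵥ Gvf p = (p 0 ^ 2 + p 1 ^ 2 + p 2 ^ 2) ^ 2 * (p 1 ^ 2 + p 2 ^ 2) := by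
      simp [Gvf, dotProduct, Fin.sum_univ_three]; ring
    rw [enorm3, hd, Real.sqrt_mul (by positivity), Real.sqrt_sq hr.le, ha]
  have hr' : (p 0 ^ 2 + p 1 ^ 2 + p 2 ^ 2) ≠ 0 := ne_of_gt hr
  have ha' : a ≠ 0 := ne_of_gt hapos
  constructor
  · ext i j
    fin_cases i <;> fin_cases j <;>
      · simp only [hRa, Matrix.transpose_apply, Matrix.mul_apply, Fin.sum_univ_three,
          Matrix.of_apply, Matrix.cons_val_zero, Matrix.cons_val_one, Matrix.head_cons,
          Matrix.cons_val_two, Matrix.tail_cons, Matrix.one_apply, Fin.mk_zero, Fin.mk_one]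
        simp only [hF, hH, hG]
        simp only [Fvf, Gvf, Hvf, Matrix.cons_val_zero, Matrix.cons_val_one, Matrix.head_cons,
          Matrix.cons_val_two, Matrix.tail_cons]
        norm_num [Fin.ext_iff]
        simp only [div_mul_div_comm, ← add_div, div_sub_div_same]
        field_simp
        first
        | ring1
        | linear_combination (-(p 0 ^ 2 + p 1 ^ 2 + p 2 ^ 2) ^ 2) * ha2
        | linear_combination (-1 : ℝ) * ha2
  · have hdecomp : Ra = (Matrix.of fun i => ![Fvf p i, Hvf p i, Gvf p i]) *
        Matrix.diagonal ![(enorm3 (Fvf p))⁻¹, (enorm3 (Hvf p))⁻¹, (enorm3 (Gvf p))⁻¹] := by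
      rw [hRa]
      ext i j
      rw [Matrix.mul_diagonal]
      fin_cases j <;>
        simp [div_eq_mul_inv]
    rw [hdecomp, Matrix.det_mul, Matrix.det_diagonal]
    have hM : (Matrix.of fun i => ![Fvf p i, Hvf p i, Gvf p i]).det =
        (p 0 ^ 2 + p 1 ^ 2 + p 2 ^ 2) ^ 3 * a ^ 2 := by
      rw [Matrix.det_fin_three]
      simp only [Matrix.of_apply, Matrix.cons_val_zero, Matrix.cons_val_one, Matrix.head_cons,
        Matrix.cons_val_two, Matrix.tail_cons]
      simp only [Fvf, Gvf, Hvf, Matrix.cons_val_zero, Matrix.cons_val_one, Matrix.head_cons,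
        Matrix.cons_val_two, Matrix.tail_cons]
      linear_combination (-(p 0 ^ 2 + p 1 ^ 2 + p 2 ^ 2) ^ 3) * ha2
    rw [hM]
    simp only [Fin.prod_univ_three, Matrix.cons_val_zero, Matrix.cons_val_one, Matrix.head_cons,
      Matrix.cons_val_two, Matrix.tail_cons, hF, hH, hG]
    field_simp
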